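/- arXiv:2212.10031 — 3 statements merged into one kernel-verified Lean document; each statement's English description precedes it below -/
import Mathlib

section
/- Let v, θ : ℝ → ℝ be twice differentiable, g, b ∈ ℝ, and p, q : ℝ → ℝ satisfy for all x: p(x) + b(2 v v' θ' + v² θ'') + g(v v'' - v² (θ')²) = 0 and q(x) + b(v v'' - v² (θ')²) - g(2 v v' θ' + v² θ'') = 0. Then for all x: d/dx [b·(-v v') - g·(-v² θ')] = q(x) - b·Δ(x), where Δ(x) := (v'(x))² + v(x)² (θ'(x))². -/
/-! Differentiating the flux gives `-b (v'² + v v'') + g (2 v v' θ' + v² θ'')`; splitting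
`v'² + v v''` as `Δ + (v v'' - v² θ'²)` leaves `-b Δ` plus exactly the terms that the
reactive power balance identifies with `q`. -/

theorem hasDerivAt_neg_mul_deriv_self {v : ℝ → ℝ} {x : ℝ} (hv : DifferentiableAt ℝ v x)
    (hv' : DifferentiableAt ℝ (deriv v) x) :
    HasDerivAt (fun y => -(v y) * deriv v y)
      (-(deriv v x ^ 2 + v x * deriv (deriv v) x)) x :=
  (hv.hasDerivAt.fun_neg.fun_mul hv'.hasDerivAt).congr_deriv (by ring)

theorem hasDerivAt_neg_sq_mul_deriv {v θ : ℝ → ℝ} {x : ℝ} (hv : DifferentiableAt ℝ v x)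
    (hθ' : DifferentiableAt ℝ (deriv θ) x) :
    HasDerivAt (fun y => -(v y) ^ 2 * deriv θ y)
      (-(2 * v x * deriv v x * deriv θ x + v x ^ 2 * deriv (deriv θ) x)) x :=
  ((hv.hasDerivAt.fun_pow 2).fun_neg.fun_mul hθ'.hasDerivAt).congr_deriv (by push_cast; ring)

theorem reactive_power_dissipation_general (v θ q : ℝ → ℝ) (g b : ℝ)
    (hv : Differentiable ℝ v) (hv' : Differentiable ℝ (deriv v))
    (hθ' : Differentiable ℝ (deriv θ))
    (hR : ∀ x, q x + b * (v x * deriv (deriv v) x - (v x) ^ 2 * (deriv θ x) ^ 2)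
          - g * (2 * v x * deriv v x * deriv θ x + (v x) ^ 2 * deriv (deriv θ) x) = 0) :
    ∀ x, deriv (fun y => b * (-(v y) * deriv v y) - g * (-(v y) ^ 2 * deriv θ y)) x
      = q x - b * ((deriv v x) ^ 2 + (v x) ^ 2 * (deriv θ x) ^ 2) := by
  intro x
  have hflux := ((hasDerivAt_neg_mul_deriv_self (hv x) (hv' x)).const_mul b).fun_sub
    ((hasDerivAt_neg_sq_mul_deriv (hv x) (hθ' x)).const_mul g)
  rw [hflux.deriv]
  linear_combination -hR x

theorem reactive_power_dissipation (v θ p q : ℝ → ℝ) (g b : ℝ)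
    (hv : Differentiable ℝ v) (hv' : Differentiable ℝ (deriv v))
    (hθ : Differentiable ℝ θ) (hθ' : Differentiable ℝ (deriv θ))
    (hA : ∀ x, p x + b * (2 * v x * deriv v x * deriv θ x + (v x) ^ 2 * deriv (deriv θ) x)
          + g * (v x * deriv (deriv v) x - (v x) ^ 2 * (deriv θ x) ^ 2) = 0)
    (hR : ∀ x, q x + b * (v x * deriv (deriv v) x - (v x) ^ 2 * (deriv θ x) ^ 2)
          - g * (2 * v x * deriv v x * deriv θ x + (v x) ^ 2 * deriv (deriv θ) x) = 0) :
    ∀ x, deriv (fun y => b * (-(v y) * deriv v y) - g * (-(v y) ^ 2 * deriv θ y)) x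
      = q x - b * ((deriv v x) ^ 2 + (v x) ^ 2 * (deriv θ x) ^ 2) :=
  reactive_power_dissipation_general v θ q g b hv hv' hθ' hR
end

section
/- Let v, θ : ℝ → ℝ be twice continuously differentiable, g, b ∈ ℝ, g² + b² ≠ 0, L > 0, and p, q : ℝ → ℝ continuous, satisfying the voltage and phase subsystem ODEs: (bp - gq)/(g²+b²) + 2vv'θ' + v²θ'' = 0 and (gp + bq)/(g²+b²) + vv'' - v²(θ')² = 0 on [0, L], together with boundary conditions v(0) = 1, v'(L) = 0, v(L)²θ'(L) = 0. Then ∫₀ᴸ (g p(x) + b q(x))/(g²+b²) dx - v'(0) = ∫₀ᴸ ((v'(x))² + v(x)²(θ'(x))²) dx. -/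
/-!
By the power-balance equation the injected power density is `v²θ'² - v v''`, and
`v v'' = (v v')' - v'²`. Integrating over `[0, L]`, the exact derivative contributes
`v(L) v'(L) - v(0) v'(0) = -v'(0)`, which leaves exactly the loss `v'² + v²θ'²`.
-/

open intervalIntegral

theorem integral_deriv_sq_add_mul_deriv_deriv {f : ℝ → ℝ} (hf : ContDiff ℝ 2 f) (a b : ℝ) :
    ∫ x in a..b, (deriv f x ^ 2 + f x * deriv (deriv f) x) = f b * deriv f b - f a * deriv f a := by
  have hf' : ContDiff ℝ 1 (deriv f) := hf.deriv'
  have hderiv (x : ℝ) : HasDerivAt (fun y => f y * deriv f y)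
      (deriv f x ^ 2 + f x * deriv (deriv f) x) x := by
    have := (hf.differentiable two_ne_zero x).hasDerivAt.mul
      (hf'.differentiable one_ne_zero x).hasDerivAt
    exact this.congr_deriv (by ring)
  refine integral_eq_sub_of_hasDerivAt (fun x _ => hderiv x) (Continuous.intervalIntegrable ?_ a b)
  exact ((hf.continuous_deriv one_le_two).pow 2).add (hf.continuous.mul (hf'.continuous_deriv le_rfl))

theorem integrated_voltage_dissipation_general (v θ p q : ℝ → ℝ) (g b L : ℝ)
    (hL : 0 < L)
    (hv : ContDiff ℝ 2 v) (hθ : ContDiff ℝ 2 θ)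
    (hP : ∀ x ∈ Set.Icc 0 L, (g * p x + b * q x) / (g ^ 2 + b ^ 2)
          + v x * deriv (deriv v) x - (v x) ^ 2 * (deriv θ x) ^ 2 = 0)
    (hb0 : v 0 = 1) (hbL : deriv v L = 0) :
    (∫ x in (0:ℝ)..L, (g * p x + b * q x) / (g ^ 2 + b ^ 2)) - deriv v 0
      = ∫ x in (0:ℝ)..L, ((deriv v x) ^ 2 + (v x) ^ 2 * (deriv θ x) ^ 2) := by
  have hv' := hv.continuous_deriv one_le_two
  have hθ' := hθ.continuous_deriv one_le_two
  have hdissipation : IntervalIntegrable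
      (fun x => deriv v x ^ 2 + v x ^ 2 * deriv θ x ^ 2) MeasureTheory.volume 0 L :=
    ((hv'.pow 2).add ((hv.continuous.pow 2).mul (hθ'.pow 2))).intervalIntegrable 0 L
  have henergy : IntervalIntegrable
      (fun x => deriv v x ^ 2 + v x * deriv (deriv v) x) MeasureTheory.volume 0 L :=
    ((hv'.pow 2).add (hv.continuous.mul (hv.deriv'.continuous_deriv le_rfl))).intervalIntegrable 0 L
  have hpower : ∫ x in (0:ℝ)..L, (g * p x + b * q x) / (g ^ 2 + b ^ 2)
      = ∫ x in (0:ℝ)..L, ((deriv v x ^ 2 + v x ^ 2 * deriv θ x ^ 2)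
          - (deriv v x ^ 2 + v x * deriv (deriv v) x)) := by
    refine integral_congr fun x hx => ?_
    rw [Set.uIcc_of_le hL.le] at hx
    linarith [hP x hx]
  rw [hpower, integral_sub hdissipation henergy, integral_deriv_sq_add_mul_deriv_deriv hv, hbL, hb0]
  ring

theorem integrated_voltage_dissipation (v θ p q : ℝ → ℝ) (g b L : ℝ)
    (hgb : g ^ 2 + b ^ 2 ≠ 0) (hL : 0 < L)
    (hv : ContDiff ℝ 2 v) (hθ : ContDiff ℝ 2 θ)
    (hp : Continuous p) (hq : Continuous q)
    (hV : ∀ x ∈ Set.Icc 0 L, (b * p x - g * q x) / (g ^ 2 + b ^ 2)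
          + 2 * v x * deriv v x * deriv θ x + (v x) ^ 2 * deriv (deriv θ) x = 0)
    (hP : ∀ x ∈ Set.Icc 0 L, (g * p x + b * q x) / (g ^ 2 + b ^ 2)
          + v x * deriv (deriv v) x - (v x) ^ 2 * (deriv θ x) ^ 2 = 0)
    (hb0 : v 0 = 1) (hbL : deriv v L = 0) (hbs : (v L) ^ 2 * deriv θ L = 0) :
    (∫ x in (0:ℝ)..L, (g * p x + b * q x) / (g ^ 2 + b ^ 2)) - deriv v 0
      = ∫ x in (0:ℝ)..L, ((deriv v x) ^ 2 + (v x) ^ 2 * (deriv θ x) ^ 2) :=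
  integrated_voltage_dissipation_general v θ p q g b L hL hv hθ hP hb0 hbL
end

section
/- Let θ, v, s, w : ℝ → ℝ be differentiable with v(x) ≠ 0 for all x, and g, b ∈ ℝ with g² + b² ≠ 0. Suppose θ' = -s/v², v' = w, s' = (b p - g q)/(g²+b²), and w' = s²/v³ - (g p + b q)/((g²+b²) v) for given p, q : ℝ → ℝ. Then for all x: p(x) + b(2 v v' θ' + v² θ'') + g(v v'' - v²(θ')²) = 0 and q(x) + b(v v'' - v²(θ')²) - g(2 v v' θ' + v² θ'') = 0 (where θ and v are twice differentiable as a consequence of the first-order system). -/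
theorem first_order_implies_second_order (θ v s w p q : ℝ → ℝ) (g b : ℝ)
    (hgb : g ^ 2 + b ^ 2 ≠ 0)
    (hθ : Differentiable ℝ θ) (hv : Differentiable ℝ v)
    (hs : Differentiable ℝ s) (hw : Differentiable ℝ w)
    (hvne : ∀ x, v x ≠ 0)
    (hθ' : ∀ x, deriv θ x = -(s x) / (v x) ^ 2)
    (hv' : ∀ x, deriv v x = w x)
    (hs' : ∀ x, deriv s x = (b * p x - g * q x) / (g ^ 2 + b ^ 2))
    (hw' : ∀ x, deriv w x = (s x) ^ 2 / (v x) ^ 3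
          - (g * p x + b * q x) / ((g ^ 2 + b ^ 2) * v x)) :
    ∀ x, (p x + b * (2 * v x * deriv v x * deriv θ x + (v x) ^ 2 * deriv (deriv θ) x)
        + g * (v x * deriv (deriv v) x - (v x) ^ 2 * (deriv θ x) ^ 2) = 0) ∧
      (q x + b * (v x * deriv (deriv v) x - (v x) ^ 2 * (deriv θ x) ^ 2)
        - g * (2 * v x * deriv v x * deriv θ x + (v x) ^ 2 * deriv (deriv θ) x) = 0) := by
  have hθd : deriv θ = fun x => -(s x) / (v x) ^ 2 := funext hθ'
  have hvd : deriv v = w := funext hv'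
  intro x
  have hvv : deriv (deriv v) x = (s x) ^ 2 / (v x) ^ 3
      - (g * p x + b * q x) / ((g ^ 2 + b ^ 2) * v x) := by
    rw [hvd, hw' x]
  have hvx := hvne x
  have hθθ : deriv (deriv θ) x
      = -(deriv s x) / (v x) ^ 2 + 2 * s x * w x / (v x) ^ 3 := by
    rw [hθd]
    have h1 : HasDerivAt (fun y => -(s y) / (v y) ^ 2)
        ((-(deriv s x) * (v x) ^ 2 - (-(s x)) * (2 * v x ^ 1 * deriv v x)) / ((v x) ^ 2) ^ 2) x := by
      exact HasDerivAt.div ((hs x).hasDerivAt.neg)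
        (((hv x).hasDerivAt).pow 2) (pow_ne_zero 2 (hvne x))
    rw [h1.deriv]
    rw [hv' x]
    field_simp
    ring
  rw [hθθ, hvv, hθ' x, hv' x, hs' x]
  constructor <;> [skip; skip] <;> field_simp <;> ring
end
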